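/- For every set of propositional formulas Γ and all finite nonempty Θ, Λ ⊆ Ω: if Γ ⊢_CLuN Dab(Θ ∪ Λ) and Γ ⊬_CLuN Dab(Λ), then there exist a nonempty Θ' ⊆ Θ and a (possibly empty) Λ' ⊆ Λ such that Dab(Θ' ∪ Λ') is a minimal Dab-consequence of Γ; consequently Θ ∩ U(Γ) ≠ ∅. -/

import Mathlib

/-- Propositional formulas: variables, ⊥, ⊃, ∧, ∨, ≡, and paraconsistent negation ~. -/
inductive Formula : Type
  | var : ℕ → Formula
  | bot : Formula
  | imp : Formula → Formula → Formula
  | conj : Formula → Formula → Formula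
  | disj : Formula → Formula → Formula
  | equiv : Formula → Formula → Formula
  | pneg : Formula → Formula
  deriving DecidableEq

namespace Formula

/-- Classical negation: ¬A := A ⊃ ⊥. -/
def neg (A : Formula) : Formula := imp A bot

end Formula

/-- Hilbert-style derivability. `cl = false` gives CLuN (full positive classical logic,
including Peirce's law, plus ⊥ ⊃ A and A ∨ ~A, with modus ponens as only rule);
`cl = true` additionally has the axiom schema (A ∧ ~A) ⊃ B, giving CL. -/
inductive Deriv (cl : Bool) (Γ : Set Formula) : Formula → Prop
  | prem {A : Formula} : A ∈ Γ → Deriv cl Γ A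
  | axK (A B : Formula) : Deriv cl Γ (A.imp (B.imp A))
  | axS (A B C : Formula) : Deriv cl Γ ((A.imp (B.imp C)).imp ((A.imp B).imp (A.imp C)))
  | axPeirce (A B : Formula) : Deriv cl Γ (((A.imp B).imp A).imp A)
  | axAndElimL (A B : Formula) : Deriv cl Γ ((A.conj B).imp A)
  | axAndElimR (A B : Formula) : Deriv cl Γ ((A.conj B).imp B)
  | axAndIntro (A B : Formula) : Deriv cl Γ (A.imp (B.imp (A.conj B)))
  | axOrIntroL (A B : Formula) : Deriv cl Γ (A.imp (A.disj B))
  | axOrIntroR (A B : Formula) : Deriv cl Γ (B.imp (A.disj B))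
  | axOrElim (A B C : Formula) : Deriv cl Γ ((A.imp C).imp ((B.imp C).imp ((A.disj B).imp C)))
  | axIffElimL (A B : Formula) : Deriv cl Γ ((A.equiv B).imp (A.imp B))
  | axIffElimR (A B : Formula) : Deriv cl Γ ((A.equiv B).imp (B.imp A))
  | axIffIntro (A B : Formula) : Deriv cl Γ ((A.imp B).imp ((B.imp A).imp (A.equiv B)))
  | axBot (A : Formula) : Deriv cl Γ (Formula.bot.imp A)
  | axEM (A : Formula) : Deriv cl Γ (A.disj A.pneg)
  | axCL (A B : Formula) : cl = true → Deriv cl Γ ((A.conj A.pneg).imp B)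
  | mp {A B : Formula} : Deriv cl Γ (A.imp B) → Deriv cl Γ A → Deriv cl Γ B

/-- Γ ⊢_CLuN A -/
def CLuN (Γ : Set Formula) (A : Formula) : Prop := Deriv false Γ A

/-- Γ ⊢_CL A -/
def CL (Γ : Set Formula) (A : Formula) : Prop := Deriv true Γ A

/-- The set of abnormalities Ω: all formulas of the form A ∧ ~A. -/
def Omega : Set Formula := {F | ∃ A : Formula, F = A.conj A.pneg}

/-- An arbitrary (noncomputable) linear order on formulas, used only to pick a canonical
ordering of the disjuncts of a Dab-formula. -/
noncomputable instance : LinearOrder Formula :=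
  @linearOrderOfSTO Formula WellOrderingRel _ (Classical.decRel _)

/-- Disjunction of a list of formulas; the empty disjunction is ⊥. -/
def listDisj : List Formula → Formula
  | [] => Formula.bot
  | [A] => A
  | A :: B :: rest => A.disj (listDisj (B :: rest))

/-- Dab(Δ): the disjunction of the members of the finite set Δ (by convention Dab(∅) := ⊥). -/
noncomputable def Dab (Δ : Finset Formula) : Formula := listDisj (Δ.sort (· ≤ ·))

/-- Dab(Δ) is a minimal Dab-consequence of Γ: Δ is finite and nonempty, Δ ⊆ Ω,
Γ ⊢_CLuN Dab(Δ), and no nonempty Δ' ⊊ Δ has Γ ⊢_CLuN Dab(Δ'). -/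
def MinDabConsequence (Γ : Set Formula) (Δ : Finset Formula) : Prop :=
  Δ.Nonempty ∧ ↑Δ ⊆ Omega ∧ CLuN Γ (Dab Δ) ∧
    ∀ Δ' : Finset Formula, Δ'.Nonempty → Δ' ⊂ Δ → ¬ CLuN Γ (Dab Δ')

/-- U(Γ): the set of formulas unreliable with respect to Γ. -/
def U (Γ : Set Formula) : Set Formula :=
  {A | ∃ Δ : Finset Formula, MinDabConsequence Γ Δ ∧ A ∈ Δ}

/-! A ⊆-minimal subset Δ of Θ ∪ Λ with Γ ⊢ Dab(Δ) is a minimal Dab-consequence of Γ. It meets Θ,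
since a disjunction can always be weakened: Δ ⊆ Λ would give Γ ⊢ Dab(Λ). -/

namespace Deriv

variable {cl : Bool} {Γ : Set Formula}

theorem imp_self (A : Formula) : Deriv cl Γ (A.imp A) :=
  mp (mp (axS A (A.imp A) A) (axK A (A.imp A))) (axK A A)

theorem imp_trans {A B C : Formula} (hAB : Deriv cl Γ (A.imp B)) (hBC : Deriv cl Γ (B.imp C)) :
    Deriv cl Γ (A.imp C) :=
  mp (mp (axS A B C) (mp (axK (B.imp C) A) hBC)) hAB

theorem listDisj_imp {B : Formula} :
    ∀ l : List Formula, (∀ A ∈ l, Deriv cl Γ (A.imp B)) → Deriv cl Γ ((listDisj l).imp B)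
  | [], _ => axBot B
  | [A], h => h A (List.mem_singleton_self A)
  | A :: C :: rest, h =>
    mp (mp (axOrElim A (listDisj (C :: rest)) B) (h A List.mem_cons_self))
      (listDisj_imp (C :: rest) fun D hD => h D (List.mem_cons_of_mem A hD))

theorem imp_listDisj {A : Formula} : ∀ l : List Formula, A ∈ l → Deriv cl Γ (A.imp (listDisj l))
  | [B], h => List.mem_singleton.mp h ▸ imp_self A
  | B :: C :: rest, h => by
    rcases List.mem_cons.mp h with rfl | h
    · exact axOrIntroL A (listDisj (C :: rest))
    · exact imp_trans (imp_listDisj (C :: rest) h) (axOrIntroR B (listDisj (C :: rest)))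

theorem dab_mono {Δ Δ' : Finset Formula} (h : Δ ⊆ Δ') (hΔ : Deriv cl Γ (Dab Δ)) :
    Deriv cl Γ (Dab Δ') :=
  mp (listDisj_imp _ fun _ hA => imp_listDisj _ ((Finset.mem_sort _).mpr
    (h ((Finset.mem_sort _).mp hA)))) hΔ

end Deriv

theorem minDabConsequence_of_minimal {Γ : Set Formula} {Δ : Finset Formula} (hne : Δ.Nonempty)
    (hΩ : ↑Δ ⊆ Omega) (hmin : Minimal (fun Δ' => CLuN Γ (Dab Δ')) Δ) :
    MinDabConsequence Γ Δ :=
  ⟨hne, hΩ, hmin.prop, fun _ _ hlt => hmin.not_prop_of_lt hlt⟩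

theorem min_dab_exists_of_dab_not_transferred_general (Γ : Set Formula) (Θ Λ : Finset Formula)
    (hΘ : ↑Θ ⊆ Omega) (hΛ : ↑Λ ⊆ Omega)
    (h1 : CLuN Γ (Dab (Θ ∪ Λ))) (h2 : ¬ CLuN Γ (Dab Λ)) :
    (∃ Θ' Λ' : Finset Formula, Θ'.Nonempty ∧ Θ' ⊆ Θ ∧ Λ' ⊆ Λ ∧
      MinDabConsequence Γ (Θ' ∪ Λ')) ∧
    (↑Θ ∩ U Γ : Set Formula) ≠ ∅ := by
  obtain ⟨Δ, hΔ, hmin⟩ :=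
    exists_minimal_le_of_wellFoundedLT (fun Δ : Finset Formula => CLuN Γ (Dab Δ)) _ h1
  have hΔΘ : (Δ ∩ Θ).Nonempty := by
    by_contra hempty
    refine h2 (Deriv.dab_mono (fun A hA => ?_) hmin.prop)
    exact (Finset.mem_union.mp (hΔ hA)).resolve_left fun hAΘ =>
      hempty ⟨A, Finset.mem_inter.mpr ⟨hA, hAΘ⟩⟩
  have hΔΩ : ↑Δ ⊆ Omega :=
    (Finset.coe_subset.mpr hΔ).trans (Finset.coe_union Θ Λ ▸ Set.union_subset hΘ hΛ)
  have hmdc : MinDabConsequence Γ Δ :=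
    minDabConsequence_of_minimal (hΔΘ.mono Finset.inter_subset_left) hΔΩ hmin
  have hsplit : Δ ∩ Θ ∪ Δ ∩ Λ = Δ := by
    rw [← Finset.inter_union_distrib_left, Finset.inter_eq_left.mpr hΔ]
  refine ⟨⟨Δ ∩ Θ, Δ ∩ Λ, hΔΘ, Finset.inter_subset_right, Finset.inter_subset_right,
    by rwa [hsplit]⟩, ?_⟩
  obtain ⟨A, hA⟩ := hΔΘ
  rw [Finset.mem_inter] at hA
  exact Set.nonempty_iff_ne_empty.mp ⟨A, hA.2, Δ, hmdc, hA.1⟩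

/-- If Γ ⊢_CLuN Dab(Θ ∪ Λ) and Γ ⊬_CLuN Dab(Λ), then there are a nonempty Θ' ⊆ Θ and a
(possibly empty) Λ' ⊆ Λ such that Dab(Θ' ∪ Λ') is a minimal Dab-consequence of Γ;
consequently Θ ∩ U(Γ) ≠ ∅. -/
theorem min_dab_exists_of_dab_not_transferred (Γ : Set Formula) (Θ Λ : Finset Formula)
    (hΘne : Θ.Nonempty) (hΛne : Λ.Nonempty) (hΘ : ↑Θ ⊆ Omega) (hΛ : ↑Λ ⊆ Omega)
    (h1 : CLuN Γ (Dab (Θ ∪ Λ))) (h2 : ¬ CLuN Γ (Dab Λ)) :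
    (∃ Θ' Λ' : Finset Formula, Θ'.Nonempty ∧ Θ' ⊆ Θ ∧ Λ' ⊆ Λ ∧
      MinDabConsequence Γ (Θ' ∪ Λ')) ∧
    (↑Θ ∩ U Γ : Set Formula) ≠ ∅ :=
  min_dab_exists_of_dab_not_transferred_general Γ Θ Λ hΘ hΛ h1 h2
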